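/- arXiv:2403.19197 — 3 statements merged into one kernel-verified Lean document; each statement's English description precedes it below -/
import Mathlib

section
/- The EMD rule is 2-approximate for the total deviation criterion (equivalently, for minimizing the total Spearman footrule distance to the preference profile): for every preference profile P over n unit tasks with v voters, every EMD schedule S satisfies Dev(S,P) ≤ 2·Dev(S*,P) for every schedule S*. -/
open Finset

/-- Completion time of task `j` in schedule `S` (a value in `{1,…,n}`). -/
def Ctime {n : ℕ} (S : Equiv.Perm (Fin n)) (j : Fin n) : ℕ := (S j : ℕ) + 1

/-- Total tardiness `T(S,P) = Σ_i Σ_j max(0, C_j(S) − C_j(V_i))`. -/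
def totalTardiness {n v : ℕ} (S : Equiv.Perm (Fin n)) (P : Fin v → Equiv.Perm (Fin n)) : ℕ :=
  ∑ i : Fin v, ∑ j : Fin n, (Ctime S j - Ctime (P i) j)

/-- Total earliness `E(S,P) = Σ_i Σ_j max(0, C_j(V_i) − C_j(S))`. -/
def totalEarliness {n v : ℕ} (S : Equiv.Perm (Fin n)) (P : Fin v → Equiv.Perm (Fin n)) : ℕ :=
  ∑ i : Fin v, ∑ j : Fin n, (Ctime (P i) j - Ctime S j)

/-- Total deviation `Dev(S,P) = Σ_i Σ_j |C_j(S) − C_j(V_i)|`. -/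
def totalDeviation {n v : ℕ} (S : Equiv.Perm (Fin n)) (P : Fin v → Equiv.Perm (Fin n)) : ℕ :=
  ∑ i : Fin v, ∑ j : Fin n, Nat.dist (Ctime S j) (Ctime (P i) j)

/-- Total number of late tasks `U(S,P) = Σ_i |{ j : C_j(S) > C_j(V_i) }|`. -/
def lateCount {n v : ℕ} (S : Equiv.Perm (Fin n)) (P : Fin v → Equiv.Perm (Fin n)) : ℕ :=
  ∑ i : Fin v, (Finset.univ.filter (fun j : Fin n => Ctime (P i) j < Ctime S j)).card

/-- `k_y(S,P)`: number of pairs (voter `i`, task `j`) with `C_j(V_i) ≤ y` and `C_j(S) > y`. -/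
def kPen {n v : ℕ} (S : Equiv.Perm (Fin n)) (P : Fin v → Equiv.Perm (Fin n)) (y : ℕ) : ℕ :=
  ∑ i : Fin v,
    (Finset.univ.filter (fun j : Fin n => Ctime (P i) j ≤ y ∧ y < Ctime S j)).card

/-- Median completion time of task `j`: the `⌈v/2⌉`-th smallest value of the multiset
`{C_j(V_1),…,C_j(V_v)}`. -/
def medC {n v : ℕ} (P : Fin v → Equiv.Perm (Fin n)) (j : Fin n) : ℕ :=
  (((Finset.univ.val : Multiset (Fin v)).map (fun i => Ctime (P i) j)).sort (· ≤ ·)).getD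
    ((v + 1) / 2 - 1) 0

/-- An EMD schedule: tasks are ordered by (strictly) increasing median completion times. -/
def IsEMD {n v : ℕ} (P : Fin v → Equiv.Perm (Fin n)) (S : Equiv.Perm (Fin n)) : Prop :=
  ∀ a b : Fin n, medC P a < medC P b → Ctime S a < Ctime S b

/-- Kendall-Tau distance between two schedules: the number of unordered pairs of tasks that
the two schedules order differently (each such pair is counted exactly once below). -/
def kendall {n : ℕ} (S V : Equiv.Perm (Fin n)) : ℕ :=
  (Finset.univ.filter
    (fun p : Fin n × Fin n => Ctime S p.1 < Ctime S p.2 ∧ Ctime V p.2 < Ctime V p.1)).card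

/-- Total Kendall-Tau distance from a schedule to the profile. -/
def kendallProfile {n v : ℕ} (S : Equiv.Perm (Fin n)) (P : Fin v → Equiv.Perm (Fin n)) : ℕ :=
  ∑ i : Fin v, kendall S (P i)

/-- Binary criterion cost `B(S,P)` for interval preferences given by release dates `r` and
due dates `d`. -/
def binCost {n v : ℕ} (r d : Fin v → Fin n → ℕ) (S : Equiv.Perm (Fin n)) : ℕ :=
  ∑ i : Fin v,
    (Finset.univ.filter (fun j : Fin n => d i j < Ctime S j ∨ Ctime S j ≤ r i j)).card

/-- Distance criterion cost `D(S,P)` for interval preferences: for each task,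
`C_j(S) − d_j(V_i)` if late, `r_j(V_i) − (C_j(S) − 1)` if early, `0` otherwise
(truncated subtraction makes exactly one of the two summands nonzero). -/
def distCost {n v : ℕ} (r d : Fin v → Fin n → ℕ) (S : Equiv.Perm (Fin n)) : ℕ :=
  ∑ i : Fin v, ∑ j : Fin n, ((Ctime S j - d i j) + (r i j + 1 - Ctime S j))

section EmdAux
-- threshold decomposition of Nat.dist
lemma dist_layer {a b N : ℕ} (hb : b ≤ N) (ha : a ≤ N) :
    Nat.dist a b = ∑ y ∈ Finset.range N,
      (if (a ≤ y ∧ y < b) ∨ (b ≤ y ∧ y < a) then 1 else 0) := by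
  have h1 : ∀ y, (if (a ≤ y ∧ y < b) ∨ (b ≤ y ∧ y < a) then (1:ℕ) else 0)
      = (if a ≤ y ∧ y < b then 1 else 0) + (if b ≤ y ∧ y < a then 1 else 0) := by
    intro y; split_ifs <;> omega
  rw [Finset.sum_congr rfl fun y _ => h1 y, Finset.sum_add_distrib]
  have h2 : ∀ c d : ℕ, d ≤ N → (∑ y ∈ Finset.range N, if c ≤ y ∧ y < d then (1:ℕ) else 0) = d - c := by
    intro c d hd
    rw [Finset.sum_boole]
    have : (Finset.range N).filter (fun y => c ≤ y ∧ y < d) = Finset.Ico c d := by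
      ext x; simp only [Finset.mem_filter, Finset.mem_range, Finset.mem_Ico]; omega
    simp [this]
  rw [h2 a b hb, h2 b a ha, Nat.dist]; omega

lemma card_val_lt (n y : ℕ) : ((Finset.univ : Finset (Fin n)).filter fun t : Fin n => (t : ℕ) < y).card = min y n := by
  have : ((Finset.univ : Finset (Fin n)).filter fun t : Fin n => (t : ℕ) < y)
      = (Finset.range (min y n)).attachFin (fun m hm => lt_of_lt_of_le (Finset.mem_range.mp hm) (min_le_right _ _)) := by
    ext t; simp [Finset.mem_attachFin, t.isLt]
  rw [this, Finset.card_attachFin, Finset.card_range]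

lemma card_ctime_le {n : ℕ} (Q : Equiv.Perm (Fin n)) (y : ℕ) :
    ((Finset.univ : Finset (Fin n)).filter fun j => Ctime Q j ≤ y).card = min y n := by
  rw [← card_val_lt n y]
  apply Finset.card_bij (fun j _ => Q j)
  · intro a ha; simp only [Finset.mem_filter, Finset.mem_univ, true_and] at *
    unfold Ctime at ha; omega
  · intro a _ b _ hab; exact Q.injective hab
  · intro b hb; refine ⟨Q.symm b, ?_, by simp⟩
    simp only [Finset.mem_filter, Finset.mem_univ, true_and] at *
    unfold Ctime; rw [Equiv.apply_symm_apply]; omega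


def wgt {n v : ℕ} (P : Fin v → Equiv.Perm (Fin n)) (y : ℕ) (j : Fin n) : ℕ :=
  (Finset.univ.filter fun i : Fin v => Ctime (P i) j ≤ y).card

lemma wgt_le {n v : ℕ} (P : Fin v → Equiv.Perm (Fin n)) (y : ℕ) (j : Fin n) :
    wgt P y j ≤ v := by
  simpa [wgt] using Finset.card_filter_le Finset.univ (fun i : Fin v => Ctime (P i) j ≤ y)

lemma wgt_eq_countP {n v : ℕ} (P : Fin v → Equiv.Perm (Fin n)) (y : ℕ) (j : Fin n) :
    wgt P y j = (((Finset.univ.val : Multiset (Fin v)).map (fun i => Ctime (P i) j)).sort (· ≤ ·)).countP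
      (fun x => decide (x ≤ y)) := by
  rw [← Multiset.coe_countP, Multiset.sort_eq, Multiset.countP_map]
  rfl

lemma sort_length {n v : ℕ} (P : Fin v → Equiv.Perm (Fin n)) (j : Fin n) :
    (((Finset.univ.val : Multiset (Fin v)).map (fun i => Ctime (P i) j)).sort (· ≤ ·)).length = v := by
  rw [Multiset.length_sort, Multiset.card_map]
  simp

lemma med_le {n v : ℕ} {P : Fin v → Equiv.Perm (Fin n)} {y : ℕ} {j : Fin n}
    (h : medC P j ≤ y) : v ≤ 2 * wgt P y j := by
  rcases Nat.eq_zero_or_pos v with hv | hv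
  · omega
  set L := (((Finset.univ.val : Multiset (Fin v)).map (fun i => Ctime (P i) j)).sort (· ≤ ·)) with hL
  have hlen : L.length = v := sort_length P j
  have hsort : L.Pairwise (· ≤ ·) := Multiset.pairwise_sort _ _
  set k := (v + 1) / 2 - 1 with hk
  have hkv : k < v := by omega
  have hget : L[k]'(by omega) ≤ y := by
    have := List.getD_eq_getElem L 0 (show k < L.length by omega)
    unfold medC at h; rw [← hL, ← hk] at h; omega
  have hcount : k + 1 ≤ L.countP (fun x => decide (x ≤ y)) := by
    have hsplit : L.countP (fun x => decide (x ≤ y)) =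
        (L.take (k+1)).countP (fun x => decide (x ≤ y)) +
        (L.drop (k+1)).countP (fun x => decide (x ≤ y)) := by
      rw [← List.countP_append, List.take_append_drop]
    have htake : (L.take (k+1)).countP (fun x => decide (x ≤ y)) = k + 1 := by
      rw [List.countP_eq_length.mpr, List.length_take]
      · omega
      · intro a ha
        obtain ⟨i, hi, rfl⟩ := List.mem_iff_getElem.mp ha
        have hilen : i < L.length := by
          rw [List.length_take] at hi; omega
        rw [List.getElem_take]
        have : L.get ⟨i, hilen⟩ ≤ L.get ⟨k, by omega⟩ := by
          apply hsort.rel_get_of_le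
          simp only [Fin.mk_le_mk]
          rw [List.length_take] at hi; omega
        simp only [List.get_eq_getElem] at this
        simp only [decide_eq_true_eq]
        omega
    omega
  rw [wgt_eq_countP, ← hL]
  omega

lemma med_gt {n v : ℕ} {P : Fin v → Equiv.Perm (Fin n)} {y : ℕ} {j : Fin n}
    (h : y < medC P j) : 2 * wgt P y j ≤ v := by
  rcases Nat.eq_zero_or_pos v with hv | hv
  · have := wgt_le P y j; omega
  set L := (((Finset.univ.val : Multiset (Fin v)).map (fun i => Ctime (P i) j)).sort (· ≤ ·)) with hL
  have hlen : L.length = v := sort_length P j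
  have hsort : L.Pairwise (· ≤ ·) := Multiset.pairwise_sort _ _
  set k := (v + 1) / 2 - 1 with hk
  have hkv : k < v := by omega
  have hget : y < L[k]'(by omega) := by
    have := List.getD_eq_getElem L 0 (show k < L.length by omega)
    unfold medC at h; rw [← hL, ← hk] at h; omega
  have hcount : L.countP (fun x => decide (x ≤ y)) ≤ k := by
    have hsplit : L.countP (fun x => decide (x ≤ y)) =
        (L.take k).countP (fun x => decide (x ≤ y)) +
        (L.drop k).countP (fun x => decide (x ≤ y)) := by
      rw [← List.countP_append, List.take_append_drop]
    have hdrop : (L.drop k).countP (fun x => decide (x ≤ y)) = 0 := by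
      rw [List.countP_eq_zero]
      intro a ha
      obtain ⟨i, hi, rfl⟩ := List.mem_iff_getElem.mp ha
      rw [List.getElem_drop]
      have hilen : k + i < L.length := by
        rw [List.length_drop] at hi; omega
      have : L.get ⟨k, by omega⟩ ≤ L.get ⟨k + i, hilen⟩ := by
        apply hsort.rel_get_of_le; simp
      simp only [List.get_eq_getElem] at this
      simp only [decide_eq_true_eq]
      omega
    have htake : (L.take k).countP (fun x => decide (x ≤ y)) ≤ k := by
      calc (L.take k).countP (fun x => decide (x ≤ y)) ≤ (L.take k).length := List.countP_le_length
        _ ≤ k := by rw [List.length_take]; omega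
    omega
  rw [wgt_eq_countP, ← hL]
  omega


def layer {n v : ℕ} (S : Equiv.Perm (Fin n)) (P : Fin v → Equiv.Perm (Fin n)) (y : ℕ) : ℕ :=
  ∑ j : Fin n, if Ctime S j ≤ y then v - wgt P y j else wgt P y j

lemma sum_wgt {n v : ℕ} (P : Fin v → Equiv.Perm (Fin n)) (y : ℕ) :
    ∑ j : Fin n, wgt P y j = v * min y n := by
  unfold wgt
  simp only [Finset.card_filter]
  rw [Finset.sum_comm]
  have : ∀ i : Fin v, (∑ j : Fin n, if Ctime (P i) j ≤ y then 1 else 0) = min y n := by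
    intro i
    rw [Finset.sum_boole]
    exact card_ctime_le (P i) y
  rw [Finset.sum_congr rfl fun i _ => this i]
  simp [Finset.card_univ, mul_comm]

lemma card_not_wgt {n v : ℕ} (P : Fin v → Equiv.Perm (Fin n)) (y : ℕ) (j : Fin n) :
    ((Finset.univ : Finset (Fin v)).filter fun i => ¬ Ctime (P i) j ≤ y).card = v - wgt P y j := by
  have := Finset.card_filter_add_card_filter_not (s := (Finset.univ : Finset (Fin v)))
    (p := fun i => Ctime (P i) j ≤ y)
  unfold wgt
  simp only [Finset.card_univ, Fintype.card_fin] at this ⊢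
  omega

lemma dev_eq_sum_layer {n v : ℕ} (S : Equiv.Perm (Fin n)) (P : Fin v → Equiv.Perm (Fin n)) :
    totalDeviation S P = ∑ y ∈ Finset.range n, layer S P y := by
  unfold totalDeviation
  have hb : ∀ (Q : Equiv.Perm (Fin n)) (j : Fin n), Ctime Q j ≤ n := fun Q j => (Q j).isLt
  calc ∑ i : Fin v, ∑ j : Fin n, Nat.dist (Ctime S j) (Ctime (P i) j)
      = ∑ i : Fin v, ∑ j : Fin n, ∑ y ∈ Finset.range n,
          (if (Ctime S j ≤ y ∧ y < Ctime (P i) j) ∨ (Ctime (P i) j ≤ y ∧ y < Ctime S j)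
            then 1 else 0) := by
        refine Finset.sum_congr rfl fun i _ => Finset.sum_congr rfl fun j _ => ?_
        exact dist_layer (hb (P i) j) (hb S j)
    _ = ∑ y ∈ Finset.range n, ∑ j : Fin n, ∑ i : Fin v,
          (if (Ctime S j ≤ y ∧ y < Ctime (P i) j) ∨ (Ctime (P i) j ≤ y ∧ y < Ctime S j)
            then 1 else 0) := by
        rw [Finset.sum_comm]
        refine Eq.trans (Finset.sum_congr rfl fun j _ => Finset.sum_comm) ?_
        rw [Finset.sum_comm]
    _ = ∑ y ∈ Finset.range n, layer S P y := by
        refine Finset.sum_congr rfl fun y _ => Finset.sum_congr rfl fun j _ => ?_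
        by_cases h : Ctime S j ≤ y
        · rw [if_pos h]
          have : ∀ i : Fin v, (if (Ctime S j ≤ y ∧ y < Ctime (P i) j) ∨ (Ctime (P i) j ≤ y ∧ y < Ctime S j)
              then (1:ℕ) else 0) = if ¬ Ctime (P i) j ≤ y then 1 else 0 := by
            intro i; split_ifs <;> omega
          rw [Finset.sum_congr rfl fun i _ => this i, Finset.sum_boole]
          exact_mod_cast card_not_wgt P y j
        · rw [if_neg h]
          have : ∀ i : Fin v, (if (Ctime S j ≤ y ∧ y < Ctime (P i) j) ∨ (Ctime (P i) j ≤ y ∧ y < Ctime S j)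
              then (1:ℕ) else 0) = if Ctime (P i) j ≤ y then 1 else 0 := by
            intro i; split_ifs <;> omega
          rw [Finset.sum_congr rfl fun i _ => this i, Finset.sum_boole]
          rfl


def mlayer {n v : ℕ} (P : Fin v → Equiv.Perm (Fin n)) (y : ℕ) : ℕ :=
  ∑ j : Fin n, if medC P j ≤ y then v - wgt P y j else wgt P y j

lemma mlayer_le_layer {n v : ℕ} (P : Fin v → Equiv.Perm (Fin n)) (y : ℕ)
    (T : Equiv.Perm (Fin n)) : mlayer P y ≤ layer T P y := by
  unfold mlayer layer
  refine Finset.sum_le_sum fun j _ => ?_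
  have h1 := wgt_le P y j
  by_cases hm : medC P j ≤ y <;> by_cases ht : Ctime T j ≤ y <;>
    simp only [hm, ht, if_true, if_false]
  · exact le_refl _
  · have := med_le (P := P) (y := y) (j := j) hm; omega
  · have := med_gt (P := P) (y := y) (j := j) (by omega); omega
  · exact le_refl _

lemma layer_le_two_mlayer {n v : ℕ} {P : Fin v → Equiv.Perm (Fin n)} {S : Equiv.Perm (Fin n)}
    (hS : IsEMD P S) (y : ℕ) : layer S P y ≤ 2 * mlayer P y := by
  classical
  set w : Fin n → ℕ := wgt P y with hw
  set A : Finset (Fin n) := Finset.univ.filter (fun j => medC P j ≤ y) with hA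
  set F : Finset (Fin n) := Finset.univ.filter (fun j => Ctime S j ≤ y) with hF
  -- sums split
  have hlayer : layer S P y = ∑ j ∈ F, (v - w j) + ∑ j ∈ Finset.univ \ F, w j := by
    unfold layer
    rw [Finset.sum_ite, ← Finset.filter_not, hF]
  have hmlayer : mlayer P y = ∑ j ∈ A, (v - w j) + ∑ j ∈ Finset.univ \ A, w j := by
    unfold mlayer
    rw [Finset.sum_ite, ← Finset.filter_not, hA]
  -- W identity
  have hW : ∑ j : Fin n, w j = v * F.card := by
    rw [hw, sum_wgt, hF, card_ctime_le]
  have hwle : ∀ j : Fin n, w j ≤ v := fun j => wgt_le P y j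
  -- comparability of the two "prefix" sets
  have hcomp : A ⊆ F ∨ F ⊆ A := by
    by_contra hc
    push_neg at hc
    obtain ⟨hAF, hFA⟩ := hc
    obtain ⟨x, hxA, hxF⟩ := Finset.not_subset.mp hAF
    obtain ⟨z, hzF, hzA⟩ := Finset.not_subset.mp hFA
    simp only [hA, hF, Finset.mem_filter, Finset.mem_univ, true_and] at hxA hxF hzF hzA
    have hmed : medC P z > y := by omega
    have := hS x z (by omega)
    omega
  have hsub_m : ∀ B : Finset (Fin n), ∑ j ∈ B, w j ≤ v * B.card := by
    intro B
    calc ∑ j ∈ B, w j ≤ ∑ _j ∈ B, v := Finset.sum_le_sum fun j _ => hwle j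
      _ = v * B.card := by rw [Finset.sum_const, smul_eq_mul, mul_comm]
  rcases hcomp with hAF | hFA
  · -- A ⊆ F
    have hsplitF : ∑ j ∈ F, (v - w j) = ∑ j ∈ A, (v - w j) + ∑ j ∈ F \ A, (v - w j) := by
      rw [add_comm, Finset.sum_sdiff hAF]
    have hsub1 : ∑ j ∈ Finset.univ \ F, w j ≤ ∑ j ∈ Finset.univ \ A, w j :=
      Finset.sum_le_sum_of_subset (Finset.sdiff_subset_sdiff (le_refl _) hAF)
    -- key : v * (F.card - A.card) ≤ ∑_{univ \ A} w
    have hcardA : A.card ≤ F.card := Finset.card_le_card hAF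
    have hWA : ∑ j ∈ A, w j + ∑ j ∈ Finset.univ \ A, w j = v * F.card := by
      rw [← hW, add_comm, Finset.sum_sdiff (Finset.subset_univ A)]
    have hkey : ∑ j ∈ F \ A, (v - w j) ≤ ∑ j ∈ Finset.univ \ A, w j := by
      have h1 : ∑ j ∈ F \ A, (v - w j) ≤ v * (F.card - A.card) := by
        calc ∑ j ∈ F \ A, (v - w j) ≤ ∑ _j ∈ F \ A, v :=
              Finset.sum_le_sum fun j _ => Nat.sub_le _ _
          _ = v * (F \ A).card := by rw [Finset.sum_const, smul_eq_mul, mul_comm]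
          _ = v * (F.card - A.card) := by rw [Finset.card_sdiff_of_subset hAF]
      have h2 := hsub_m A
      have h3 : v * (F.card - A.card) = v * F.card - v * A.card := by
        rcases Nat.exists_eq_add_of_le hcardA with ⟨c, hc⟩
        rw [hc, Nat.add_sub_cancel_left, Nat.mul_add]; omega
      omega
    omega
  · -- F ⊆ A
    have hsplitA : ∑ j ∈ A, (v - w j) = ∑ j ∈ F, (v - w j) + ∑ j ∈ A \ F, (v - w j) := by
      rw [add_comm, Finset.sum_sdiff hFA]
    have hsdiff : ∑ j ∈ Finset.univ \ F, w j = ∑ j ∈ A \ F, w j + ∑ j ∈ Finset.univ \ A, w j := by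
      have h1 : Finset.univ \ A ⊆ Finset.univ \ F := Finset.sdiff_subset_sdiff (le_refl _) hFA
      have h2 : (Finset.univ \ F) \ (Finset.univ \ A) = A \ F := by
        ext t; simp only [Finset.mem_sdiff, Finset.mem_univ, true_and]; tauto
      rw [← Finset.sum_sdiff h1, h2]
    have hcardF : F.card ≤ A.card := Finset.card_le_card hFA
    have hWA : ∑ j ∈ A, w j + ∑ j ∈ Finset.univ \ A, w j = v * F.card := by
      rw [← hW, add_comm, Finset.sum_sdiff (Finset.subset_univ A)]
    have hsumA : ∑ j ∈ A, (v - w j) + ∑ j ∈ A, w j = v * A.card := by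
      rw [← Finset.sum_add_distrib]
      calc ∑ j ∈ A, (v - w j + w j) = ∑ _j ∈ A, v :=
            Finset.sum_congr rfl fun j _ => by have := hwle j; omega
        _ = v * A.card := by rw [Finset.sum_const, smul_eq_mul, mul_comm]
    have hkey : ∑ j ∈ A \ F, w j ≤ ∑ j ∈ A, (v - w j) := by
      have h1 : ∑ j ∈ A \ F, w j ≤ v * (A.card - F.card) := by
        calc ∑ j ∈ A \ F, w j ≤ ∑ _j ∈ A \ F, v := Finset.sum_le_sum fun j _ => hwle j
          _ = v * (A \ F).card := by rw [Finset.sum_const, smul_eq_mul, mul_comm]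
          _ = v * (A.card - F.card) := by rw [Finset.card_sdiff_of_subset hFA]
      have h3 : v * (A.card - F.card) = v * A.card - v * F.card := by
        rcases Nat.exists_eq_add_of_le hcardF with ⟨c, hc⟩
        rw [hc, Nat.add_sub_cancel_left, Nat.mul_add]; omega
      have h4 : ∑ j ∈ A, w j ≤ v * F.card := by
        have := Finset.sum_le_sum_of_subset (f := w)
          (Finset.sdiff_subset (s := Finset.univ) (t := A))
        omega
      omega
    omega
end EmdAux

/-- EMD is 2-approximate for total deviation (Spearman footrule). -/
theorem emd_two_approx_deviation
    {n v : ℕ} (P : Fin v → Equiv.Perm (Fin n)) (S : Equiv.Perm (Fin n))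
    (hS : IsEMD P S) :
    ∀ Sstar : Equiv.Perm (Fin n), totalDeviation S P ≤ 2 * totalDeviation Sstar P := by
  intro Sstar
  calc totalDeviation S P = ∑ y ∈ Finset.range n, layer S P y := dev_eq_sum_layer S P
    _ ≤ ∑ y ∈ Finset.range n, 2 * mlayer P y :=
        Finset.sum_le_sum fun y _ => layer_le_two_mlayer hS y
    _ ≤ ∑ y ∈ Finset.range n, 2 * layer Sstar P y :=
        Finset.sum_le_sum fun y _ => Nat.mul_le_mul_left 2 (mlayer_le_layer P y Sstar)
    _ = 2 * ∑ y ∈ Finset.range n, layer Sstar P y := by rw [Finset.mul_sum]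
    _ = 2 * totalDeviation Sstar P := by rw [dev_eq_sum_layer]
end

section
/- The EMD rule is 2-approximate for the total earliness criterion: for every preference profile P over n unit tasks with v voters, every EMD schedule S satisfies E(S,P) ≤ 2·E(S*,P) for every schedule S*. -/
open Finset

lemma sorted_get_le_iff (l : List ℕ) (hl : l.Pairwise (· ≤ ·)) (k y : ℕ) (hk : k < l.length) :
    l[k] ≤ y ↔ k + 1 ≤ l.countP (fun x => decide (x ≤ y)) := by
  constructor
  · intro h
    have hsplit := List.countP_append (p := fun x => decide (x ≤ y)) (l₁ := l.take (k+1)) (l₂ := l.drop (k+1))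
    rw [List.take_append_drop] at hsplit
    have htake : (l.take (k+1)).countP (fun x => decide (x ≤ y)) = (l.take (k+1)).length := by
      rw [List.countP_eq_length]
      intro a ha
      rw [List.mem_iff_getElem] at ha
      obtain ⟨m, hm, rfl⟩ := ha
      have hm' : m < k + 1 := lt_of_lt_of_le hm (by simpa using List.length_take_le (k+1) l)
      rw [List.getElem_take]
      simp only [decide_eq_true_eq]
      rcases eq_or_lt_of_le (Nat.lt_succ_iff.mp hm') with h' | h'
      · exact h' ▸ h
      · exact le_trans (hl.rel_get_of_lt (a := ⟨m, by omega⟩) (b := ⟨k, hk⟩) h') h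
    rw [List.length_take] at htake
    omega
  · intro h
    by_contra hc
    push_neg at hc
    have hsplit := List.countP_append (p := fun x => decide (x ≤ y)) (l₁ := l.take k) (l₂ := l.drop k)
    rw [List.take_append_drop] at hsplit
    have hdrop : (l.drop k).countP (fun x => decide (x ≤ y)) = 0 := by
      rw [List.countP_eq_zero]
      intro a ha
      rw [List.mem_iff_getElem] at ha
      obtain ⟨m, hm, rfl⟩ := ha
      have hm2 : m < l.length - k := by simpa using hm
      rw [List.getElem_drop]
      simp only [decide_eq_true_eq, not_le]
      rcases Nat.eq_zero_or_pos m with rfl | hm0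
      · simpa using hc
      · have : l[k]'hk ≤ l[k+m]'(by omega) :=
          hl.rel_get_of_lt (a := ⟨k, hk⟩) (b := ⟨k+m, by omega⟩) (by simp; omega)
        omega
    have htk : (l.take k).countP (fun x => decide (x ≤ y)) ≤ k := by
      calc (l.take k).countP _ ≤ (l.take k).length := List.countP_le_length
        _ ≤ k := by simpa using List.length_take_le k l
    omega

lemma ctime_le {n : ℕ} (S : Equiv.Perm (Fin n)) (j : Fin n) : Ctime S j ≤ n := (S j).isLt

lemma ctime_pos {n : ℕ} (S : Equiv.Perm (Fin n)) (j : Fin n) : 1 ≤ Ctime S j :=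
  Nat.le_add_left 1 _

lemma card_filter_ctime_le {n : ℕ} (S : Equiv.Perm (Fin n)) (y : ℕ) (hy : y ≤ n) :
    (univ.filter (fun j : Fin n => Ctime S j ≤ y)).card = y := by
  rw [Finset.card_filter]
  have h1 : ∑ j : Fin n, (if Ctime S j ≤ y then 1 else 0)
      = ∑ j : Fin n, (if (j : ℕ) + 1 ≤ y then 1 else 0) :=
    Equiv.sum_comp S (fun j : Fin n => if (j : ℕ) + 1 ≤ y then 1 else 0)
  rw [h1, Fin.sum_univ_eq_sum_range (fun k => if k + 1 ≤ y then 1 else 0) n,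
    ← Finset.card_filter]
  have : (range n).filter (fun k => k + 1 ≤ y) = range y := by
    ext z; simp; omega
  rw [this, card_range]

lemma sum_ctime {n : ℕ} (S : Equiv.Perm (Fin n)) :
    ∑ j : Fin n, Ctime S j = ∑ j : Fin n, ((j : ℕ) + 1) :=
  Equiv.sum_comp S (fun j : Fin n => (j : ℕ) + 1)

lemma earliness_eq_tardiness {n v : ℕ} (S : Equiv.Perm (Fin n))
    (P : Fin v → Equiv.Perm (Fin n)) : totalEarliness S P = totalTardiness S P := by
  unfold totalEarliness totalTardiness
  refine Finset.sum_congr rfl (fun i _ => ?_)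
  have h1 : ∑ j : Fin n, (Ctime (P i) j - Ctime S j) + ∑ j : Fin n, Ctime S j
      = ∑ j : Fin n, Ctime (P i) j + ∑ j : Fin n, (Ctime S j - Ctime (P i) j) := by
    rw [← Finset.sum_add_distrib, ← Finset.sum_add_distrib]
    exact Finset.sum_congr rfl (fun j _ => by omega)
  have h2 : ∑ j : Fin n, Ctime S j = ∑ j : Fin n, Ctime (P i) j := by
    rw [sum_ctime, sum_ctime]
  omega

lemma tardiness_eq_sum_kPen {n v : ℕ} (S : Equiv.Perm (Fin n))
    (P : Fin v → Equiv.Perm (Fin n)) :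
    totalTardiness S P = ∑ y ∈ range n, kPen S P y := by
  unfold totalTardiness kPen
  refine Eq.trans (Finset.sum_congr rfl (fun i (_ : i ∈ univ) => ?_)) Finset.sum_comm
  have h1 : ∀ j : Fin n, Ctime S j - Ctime (P i) j
      = ∑ y ∈ range n, (if Ctime (P i) j ≤ y ∧ y < Ctime S j then 1 else 0) := by
    intro j
    rw [← Finset.card_filter]
    have : (range n).filter (fun y => Ctime (P i) j ≤ y ∧ y < Ctime S j)
        = Finset.Ico (Ctime (P i) j) (Ctime S j) := by
      ext z
      have := ctime_le S j
      simp [Finset.mem_Ico]; omega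
    rw [this, Nat.card_Ico]
  calc ∑ j : Fin n, (Ctime S j - Ctime (P i) j)
      = ∑ j : Fin n, ∑ y ∈ range n, (if Ctime (P i) j ≤ y ∧ y < Ctime S j then 1 else 0) :=
        Finset.sum_congr rfl (fun j _ => h1 j)
    _ = ∑ y ∈ range n, ∑ j : Fin n, (if Ctime (P i) j ≤ y ∧ y < Ctime S j then 1 else 0) :=
        Finset.sum_comm
    _ = ∑ y ∈ range n, (univ.filter (fun j : Fin n => Ctime (P i) j ≤ y ∧ y < Ctime S j)).card := by
        refine Finset.sum_congr rfl (fun y _ => ?_)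
        rw [Finset.card_filter]

lemma kPen_eq_sum_f {n v : ℕ} (S : Equiv.Perm (Fin n)) (P : Fin v → Equiv.Perm (Fin n)) (y : ℕ) :
    kPen S P y = ∑ j ∈ univ.filter (fun j : Fin n => y < Ctime S j),
      (univ.filter (fun i : Fin v => Ctime (P i) j ≤ y)).card := by
  unfold kPen
  calc ∑ i : Fin v, (univ.filter (fun j : Fin n => Ctime (P i) j ≤ y ∧ y < Ctime S j)).card
      = ∑ i : Fin v, ∑ j : Fin n, (if Ctime (P i) j ≤ y ∧ y < Ctime S j then 1 else 0) :=
        Finset.sum_congr rfl (fun i _ => Finset.card_filter _ _)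
    _ = ∑ j : Fin n, ∑ i : Fin v, (if Ctime (P i) j ≤ y ∧ y < Ctime S j then 1 else 0) :=
        Finset.sum_comm
    _ = ∑ j : Fin n, (if y < Ctime S j then (univ.filter (fun i : Fin v => Ctime (P i) j ≤ y)).card else 0) := by
        refine Finset.sum_congr rfl (fun j _ => ?_)
        by_cases hj : y < Ctime S j
        · simp only [hj, and_true, if_true]
          rw [Finset.card_filter]
        · simp [hj]
    _ = _ := (Finset.sum_filter _ _).symm

lemma medC_le_iff {n v : ℕ} (P : Fin v → Equiv.Perm (Fin n)) (j : Fin n) (y : ℕ) :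
    medC P j ≤ y ↔ (v+1)/2 ≤ (univ.filter (fun i : Fin v => Ctime (P i) j ≤ y)).card := by
  set m : Multiset ℕ := (Finset.univ.val : Multiset (Fin v)).map (fun i => Ctime (P i) j) with hm
  set l := m.sort (· ≤ ·) with hl
  have hlen : l.length = v := by simp [hl, hm, Multiset.length_sort]
  have hcount : (univ.filter (fun i : Fin v => Ctime (P i) j ≤ y)).card
      = l.countP (fun x => decide (x ≤ y)) := by
    have h1 : Multiset.countP (fun x => x ≤ y) m
        = (univ.filter (fun i : Fin v => Ctime (P i) j ≤ y)).card := by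
      rw [hm, Multiset.countP_map]
      rfl
    rw [← h1, ← Multiset.sort_eq m (· ≤ ·), Multiset.coe_countP, ← hl]
  rcases Nat.eq_zero_or_pos v with rfl | hv
  · have : l = [] := List.length_eq_zero_iff.mp (by omega)
    simp [medC, ← hl, this]
  · have hk : (v+1)/2 - 1 < l.length := by omega
    have hmed : medC P j = l[(v+1)/2 - 1] := by
      rw [medC, ← hl, List.getD_eq_getElem _ _ hk]
    rw [hmed, hcount, sorted_get_le_iff l (Multiset.pairwise_sort _ _) _ y hk]
    omega

lemma kPen_le_two_kPen {n v : ℕ} (P : Fin v → Equiv.Perm (Fin n)) (S Sstar : Equiv.Perm (Fin n))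
    (hS : IsEMD P S) (y : ℕ) (hy : y ≤ n) :
    kPen S P y ≤ 2 * kPen Sstar P y := by
  classical
  set f : Fin n → ℕ := fun j => (univ.filter (fun i : Fin v => Ctime (P i) j ≤ y)).card with hf
  have hfv : ∀ j, f j ≤ v := by
    intro j
    calc f j ≤ (univ : Finset (Fin v)).card := Finset.card_filter_le _ _
      _ = v := by simp
  set p : Fin n → Prop := fun j => Ctime S j ≤ y with hp
  set q : Fin n → Prop := fun j => Ctime Sstar j ≤ y with hq
  -- rewrite kPen as sums over complements
  have hK : kPen S P y = ∑ j ∈ univ.filter (fun j => ¬ p j), f j := by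
    rw [kPen_eq_sum_f]
    congr 1
    exact Finset.filter_congr (fun j _ => by simp [hp, not_le])
  have hKs : kPen Sstar P y = ∑ j ∈ univ.filter (fun j => ¬ q j), f j := by
    rw [kPen_eq_sum_f]
    congr 1
    exact Finset.filter_congr (fun j _ => by simp [hq, not_le])
  -- total sum of f
  have hsumf : ∑ j ∈ univ.filter p, f j + ∑ j ∈ univ.filter (fun j => ¬ p j), f j
      = ∑ j : Fin n, f j := Finset.sum_filter_add_sum_filter_not _ _ _
  have hsumfs : ∑ j ∈ univ.filter q, f j + ∑ j ∈ univ.filter (fun j => ¬ q j), f j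
      = ∑ j : Fin n, f j := Finset.sum_filter_add_sum_filter_not _ _ _
  have hcardL : (univ.filter p).card = y := card_filter_ctime_le S y hy
  have hcardLs : (univ.filter q).card = y := card_filter_ctime_le Sstar y hy
  -- nesting from EMD
  have hnest : (∀ j, medC P j ≤ y → p j) ∨ (∀ j, p j → medC P j ≤ y) := by
    by_contra hc
    push_neg at hc
    obtain ⟨⟨j, hmj, hpj⟩, ⟨a, hpa, hma⟩⟩ := hc
    have : Ctime S j < Ctime S a := hS j a (by omega)
    simp only [hp, not_le] at hpj
    omega
  rw [hK, hKs]
  rcases hnest with hcase | hcase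
  · -- M ⊆ L : on ¬p, f j ≤ v - f j, i.e. 2 f j ≤ v
    have hsmall : ∀ j, ¬ p j → 2 * f j ≤ v := by
      intro j hj
      have : ¬ medC P j ≤ y := fun h => hj (hcase j h)
      rw [medC_le_iff] at this
      have h2 : ¬ (v+1)/2 ≤ f j := this
      have := hfv j
      omega
    -- split Lc by q
    have hsplit : ∑ j ∈ (univ.filter (fun j => ¬ p j)).filter q, f j
        + ∑ j ∈ (univ.filter (fun j => ¬ p j)).filter (fun j => ¬ q j), f j
        = ∑ j ∈ univ.filter (fun j => ¬ p j), f j :=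
      Finset.sum_filter_add_sum_filter_not _ _ _
    have h1 : ∑ j ∈ (univ.filter (fun j => ¬ p j)).filter (fun j => ¬ q j), f j
        ≤ ∑ j ∈ univ.filter (fun j => ¬ q j), f j := by
      apply Finset.sum_le_sum_of_subset
      intro j hj
      simp only [Finset.mem_filter] at *
      tauto
    -- the q-part: f ≤ v - f pointwise, and v - f summed over L* equals kPen S*
    have hg : ∑ j ∈ univ.filter q, (v - f j) = ∑ j ∈ univ.filter (fun j => ¬ q j), f j := by
      have e1 : ∑ j ∈ univ.filter q, (v - f j) + ∑ j ∈ univ.filter q, f j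
          = v * y := by
        rw [← Finset.sum_add_distrib]
        have : ∀ j ∈ univ.filter q, (v - f j) + f j = v := fun j _ => by
          have := hfv j; omega
        rw [Finset.sum_congr rfl this, Finset.sum_const, hcardLs, smul_eq_mul]
        exact Nat.mul_comm y v
      have e2 : ∑ j : Fin n, f j = v * y := by
        have : ∑ j : Fin n, f j = ∑ i : Fin v,
            (univ.filter (fun j : Fin n => Ctime (P i) j ≤ y)).card := by
          simp only [hf, Finset.card_filter]
          exact Finset.sum_comm
        rw [this]
        rw [Finset.sum_congr rfl (fun i _ => card_filter_ctime_le (P i) y hy),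
          Finset.sum_const, smul_eq_mul, Finset.card_univ, Fintype.card_fin]
      omega
    have h2 : ∑ j ∈ (univ.filter (fun j => ¬ p j)).filter q, f j
        ≤ ∑ j ∈ univ.filter (fun j => ¬ q j), f j := by
      rw [← hg]
      calc ∑ j ∈ (univ.filter (fun j => ¬ p j)).filter q, f j
          ≤ ∑ j ∈ (univ.filter (fun j => ¬ p j)).filter q, (v - f j) := by
            apply Finset.sum_le_sum
            intro j hj
            simp only [Finset.mem_filter] at hj
            have := hsmall j hj.1.2
            omega
        _ ≤ ∑ j ∈ univ.filter q, (v - f j) := by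
            apply Finset.sum_le_sum_of_subset
            intro j hj
            simp only [Finset.mem_filter] at *
            tauto
    omega
  · -- L ⊆ M : on p, v ≤ 2 f j
    have hbig : ∀ j, p j → v ≤ 2 * f j := by
      intro j hj
      have h2 : (v+1)/2 ≤ f j := (medC_le_iff P j y).mp (hcase j hj)
      omega
    -- split L* by p and L by q
    have hsplit1 : ∑ j ∈ (univ.filter q).filter p, f j
        + ∑ j ∈ (univ.filter q).filter (fun j => ¬ p j), f j
        = ∑ j ∈ univ.filter q, f j := Finset.sum_filter_add_sum_filter_not _ _ _
    have hsplit2 : ∑ j ∈ (univ.filter p).filter q, f j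
        + ∑ j ∈ (univ.filter p).filter (fun j => ¬ q j), f j
        = ∑ j ∈ univ.filter p, f j := Finset.sum_filter_add_sum_filter_not _ _ _
    have hsetseq : (univ.filter q).filter p = (univ.filter p).filter q := by
      rw [Finset.filter_filter, Finset.filter_filter]
      exact Finset.filter_congr (fun j _ => and_comm)
    have hseq : ∑ j ∈ (univ.filter q).filter p, f j = ∑ j ∈ (univ.filter p).filter q, f j := by
      rw [hsetseq]
    -- card equality
    have hcsplit1 : ((univ.filter q).filter p).card
        + ((univ.filter q).filter (fun j => ¬ p j)).card = y := by
      have h := Finset.card_filter_add_card_filter_not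
        (s := univ.filter q) p
      omega
    have hcsplit2 : ((univ.filter p).filter q).card
        + ((univ.filter p).filter (fun j => ¬ q j)).card = y := by
      have h := Finset.card_filter_add_card_filter_not
        (s := univ.filter p) q
      omega
    have hcards : ((univ.filter q).filter (fun j => ¬ p j)).card
        = ((univ.filter p).filter (fun j => ¬ q j)).card := by
      have := congrArg Finset.card hsetseq
      omega
    -- bound the cross terms
    have hb1 : ∑ j ∈ (univ.filter q).filter (fun j => ¬ p j), f j
        ≤ ∑ j ∈ univ.filter (fun j => ¬ p j), f j := by
      apply Finset.sum_le_sum_of_subset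
      intro j hj
      simp only [Finset.mem_filter] at *
      tauto
    have hb2 : 2 * ∑ j ∈ (univ.filter p).filter (fun j => ¬ q j), f j
        ≥ v * ((univ.filter p).filter (fun j => ¬ q j)).card := by
      calc 2 * ∑ j ∈ (univ.filter p).filter (fun j => ¬ q j), f j
          = ∑ j ∈ (univ.filter p).filter (fun j => ¬ q j), 2 * f j := by
            rw [Finset.mul_sum]
        _ ≥ ∑ j ∈ (univ.filter p).filter (fun j => ¬ q j), v := by
            apply Finset.sum_le_sum
            intro j hj
            simp only [Finset.mem_filter] at hj
            exact hbig j hj.1.2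
        _ = ((univ.filter p).filter (fun j => ¬ q j)).card * v := by
            rw [Finset.sum_const, smul_eq_mul]
        _ = v * ((univ.filter p).filter (fun j => ¬ q j)).card := Nat.mul_comm _ _
    have hb3 : ∑ j ∈ (univ.filter q).filter (fun j => ¬ p j), f j
        ≤ v * ((univ.filter q).filter (fun j => ¬ p j)).card := by
      calc ∑ j ∈ (univ.filter q).filter (fun j => ¬ p j), f j
          ≤ ∑ j ∈ (univ.filter q).filter (fun j => ¬ p j), v :=
            Finset.sum_le_sum (fun j _ => hfv j)
        _ = ((univ.filter q).filter (fun j => ¬ p j)).card * v := by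
            rw [Finset.sum_const, smul_eq_mul]
        _ = v * _ := Nat.mul_comm _ _
    have hvc : v * ((univ.filter q).filter (fun j => ¬ p j)).card
        = v * ((univ.filter p).filter (fun j => ¬ q j)).card := by rw [hcards]
    omega

/-- EMD is 2-approximate for total earliness. -/
theorem emd_two_approx_earliness
    {n v : ℕ} (P : Fin v → Equiv.Perm (Fin n)) (S : Equiv.Perm (Fin n))
    (hS : IsEMD P S) :
    ∀ Sstar : Equiv.Perm (Fin n), totalEarliness S P ≤ 2 * totalEarliness Sstar P := by
  intro Sstar
  rw [earliness_eq_tardiness S P, earliness_eq_tardiness Sstar P,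
    tardiness_eq_sum_kPen, tardiness_eq_sum_kPen, Finset.mul_sum]
  exact Finset.sum_le_sum
    (fun y hy => kPen_le_two_kPen P S Sstar hS y (le_of_lt (Finset.mem_range.mp hy)))
end

section
/- The EMD rule does not fulfill temporal unanimity: there exist n, v, a preference profile P of v preferred schedules over n unit tasks, a task j, and a time c such that C_j(V_i) = c for every voter i, yet every EMD schedule S for P satisfies C_j(S) ≠ c. (A witness is the 4-task, 3-voter profile 2≺1≺3≺4, 3≺1≺2≺4, 4≺1≺2≺3, where every voter completes task 1 at time 2 but the medians m_1 = 2, m_2 = m_3 = 3, m_4 = 4 force task 1 to complete at time 1.) -/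
open Finset

def myP : Fin 3 → Equiv.Perm (Fin 4) :=
  ![⟨![1,0,2,3], ![1,0,2,3], by decide, by decide⟩,
    ⟨![1,2,0,3], ![2,0,1,3], by decide, by decide⟩,
    ⟨![1,2,3,0], ![3,0,1,2], by decide, by decide⟩]

theorem med_eq (j : Fin 4) (l : List ℕ) (hl : l.Pairwise (fun a b => decide (a ≤ b) = true))
    (h : ((Finset.univ.val : Multiset (Fin 3)).map fun i => Ctime (myP i) j) = (↑l : Multiset ℕ)) :
    medC myP j = l.getD 1 0 := by
  simp only [medC, h, Multiset.coe_sort, List.mergeSort_of_pairwise hl]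

/-- The EMD rule does not fulfill temporal unanimity. -/
theorem emd_not_temporal_unanimity :
    ∃ (n v : ℕ) (P : Fin v → Equiv.Perm (Fin n)) (j : Fin n) (c : ℕ),
      (∀ i : Fin v, Ctime (P i) j = c) ∧
      ∀ S : Equiv.Perm (Fin n), IsEMD P S → Ctime S j ≠ c := by
  refine ⟨4, 3, myP, 0, 2, by decide, ?_⟩
  intro S hS
  have h01 : Ctime S 0 < Ctime S 1 := hS 0 1 (by rw [med_eq 0 [2,2,2] (by decide) (by decide), med_eq 1 [1,3,3] (by decide) (by decide)]; norm_num)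
  have h02 : Ctime S 0 < Ctime S 2 := hS 0 2 (by rw [med_eq 0 [2,2,2] (by decide) (by decide), med_eq 2 [1,3,4] (by decide) (by decide)]; norm_num)
  have h13 : Ctime S 1 < Ctime S 3 := hS 1 3 (by rw [med_eq 1 [1,3,3] (by decide) (by decide), med_eq 3 [1,4,4] (by decide) (by decide)]; norm_num)
  have h23 : Ctime S 2 < Ctime S 3 := hS 2 3 (by rw [med_eq 2 [1,3,4] (by decide) (by decide), med_eq 3 [1,4,4] (by decide) (by decide)]; norm_num)
  have h12 : S 1 ≠ S 2 := fun h => by exact absurd (S.injective h) (by decide)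
  have b1 : (S 1 : ℕ) < 4 := (S 1).isLt
  have b2 : (S 2 : ℕ) < 4 := (S 2).isLt
  have b3 : (S 3 : ℕ) < 4 := (S 3).isLt
  have h12' : (S 1 : ℕ) ≠ (S 2 : ℕ) := fun h => h12 (Fin.ext h)
  simp only [Ctime] at *
  omega
end
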